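/- arXiv:1509.06445 — 4 statements merged into one kernel-verified Lean document; each statement's English description precedes it below -/
import Mathlib

section
/- Let X be a Banach space and M, N closed subspaces of X. Then M + N is closed in X if and only if there exists a constant K > 0 such that every x ∈ M + N admits a decomposition x = m + n with m ∈ M, n ∈ N, and ‖m‖ ≤ K·‖x‖. -/
theorem closed_sum_iff_bounded_decomposition (X : Type*) [NormedAddCommGroup X]
    [NormedSpace ℝ X] [CompleteSpace X] (M N : Submodule ℝ X)
    (hM : IsClosed (M : Set X)) (hN : IsClosed (N : Set X)) :
    IsClosed ((M ⊔ N : Submodule ℝ X) : Set X) ↔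
      ∃ K > (0 : ℝ), ∀ x ∈ M ⊔ N, ∃ m ∈ M, ∃ n ∈ N, x = m + n ∧ ‖m‖ ≤ K * ‖x‖ := by
  haveI : CompleteSpace M := hM.completeSpace_coe
  haveI : CompleteSpace N := hN.completeSpace_coe
  constructor
  · intro hS
    haveI : CompleteSpace (M ⊔ N : Submodule ℝ X) := hS.completeSpace_coe
    -- the continuous linear map (m, n) ↦ m + n into M ⊔ N
    let f : (M × N) →L[ℝ] (M ⊔ N : Submodule ℝ X) :=
      { toLinearMap := LinearMap.codRestrict (M ⊔ N)
          ((M.subtype).coprod N.subtype)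
          (fun p => Submodule.add_mem _ (Submodule.mem_sup_left p.1.2)
            (Submodule.mem_sup_right p.2.2))
        cont := by
          apply Continuous.subtype_mk
          exact (continuous_subtype_val.comp continuous_fst).add
            (continuous_subtype_val.comp continuous_snd) }
    have surj : Function.Surjective f := by
      rintro ⟨x, hx⟩
      obtain ⟨m, hm, n, hn, rfl⟩ := Submodule.mem_sup.mp hx
      exact ⟨(⟨m, hm⟩, ⟨n, hn⟩), rfl⟩
    obtain ⟨C, hC, hCall⟩ := f.exists_preimage_norm_le surj
    refine ⟨C, hC, fun x hx => ?_⟩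
    obtain ⟨p, hp, hpn⟩ := hCall ⟨x, hx⟩
    refine ⟨p.1, p.1.2, p.2, p.2.2, ?_, ?_⟩
    · have := congrArg Subtype.val hp
      exact this.symm
    · calc ‖(p.1 : X)‖ = ‖p.1‖ := rfl
        _ ≤ ‖p‖ := norm_fst_le p
        _ ≤ C * ‖(⟨x, hx⟩ : (M ⊔ N : Submodule ℝ X))‖ := hpn
        _ = C * ‖x‖ := rfl
  · rintro ⟨K, hK, hdec⟩
    -- the normed group hom (m, n) ↦ m + n into X
    let g : NormedAddGroupHom (M × N) X :=
      { toFun := fun p => (p.1 : X) + (p.2 : X)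
        map_add' := fun p q => by
          simp only [Prod.fst_add, Prod.snd_add, Submodule.coe_add]
          abel
        bound' := ⟨2, fun p => by
          calc ‖(p.1 : X) + (p.2 : X)‖ ≤ ‖(p.1 : X)‖ + ‖(p.2 : X)‖ := norm_add_le _ _
            _ ≤ ‖p‖ + ‖p‖ := add_le_add (norm_fst_le p) (norm_snd_le p)
            _ = 2 * ‖p‖ := by ring⟩ }
    have hsurj : g.SurjectiveOnWith (M ⊔ N : Submodule ℝ X).toAddSubgroup (K + 1) := by
      intro x hx
      obtain ⟨m, hm, n, hn, rfl, hmn⟩ := hdec x hx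
      refine ⟨(⟨m, hm⟩, ⟨n, hn⟩), rfl, ?_⟩
      have hnb : ‖n‖ ≤ (K + 1) * ‖m + n‖ := by
        calc ‖n‖ = ‖(m + n) - m‖ := by rw [add_sub_cancel_left]
          _ ≤ ‖m + n‖ + ‖m‖ := norm_sub_le _ _
          _ ≤ ‖m + n‖ + K * ‖m + n‖ := by linarith
          _ = (K + 1) * ‖m + n‖ := by ring
      have hmb : ‖m‖ ≤ (K + 1) * ‖m + n‖ := by
        have h0 : 0 ≤ ‖m + n‖ := norm_nonneg _
        nlinarith
      exact max_le hmb hnb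
    have hclos := controlled_closure_of_complete (K := (M ⊔ N : Submodule ℝ X).toAddSubgroup)
      (f := g) (by linarith : (0:ℝ) < K + 1) (one_pos) hsurj
    apply isClosed_of_closure_subset
    intro x hx
    have hx' : x ∈ ((M ⊔ N : Submodule ℝ X).toAddSubgroup).topologicalClosure := by
      exact hx
    obtain ⟨p, hp, -⟩ := hclos x hx'
    have : x = (p.1 : X) + (p.2 : X) := hp.symm
    rw [this]
    exact Submodule.add_mem _ (Submodule.mem_sup_left p.1.2) (Submodule.mem_sup_right p.2.2)
end

section
/- Let X be a Banach space and M, N closed subspaces of X. If the quotient (M+N)/N is closed in X/N, then the natural map φ : (M+N)/N → M/(M ∩ N), sending the coset (m+n) + N (with m ∈ M, n ∈ N) to m + (M ∩ N), is a well-defined bijective bounded linear operator whose inverse is also bounded. -/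
/-!
The map `m + (M ∩ N) ↦ m + N` from `M/(M ∩ N)` to `(M + N)/N` is plainly a well-defined
continuous linear bijection, and `φ` is its inverse. Both sides are Banach spaces: `(M + N)/N`
is closed by hypothesis, and `M/(M ∩ N)` is closed in `X/(M ∩ N)` because its preimage there is
`M`. The open mapping theorem therefore makes `φ` bounded.
-/

namespace Submodule

section Quotient

variable {R E : Type*} [Ring R] [AddCommGroup E] [Module R E] [TopologicalSpace E]

theorem isClosed_map_mkQ_of_le {K M : Submodule R E} (hKM : K ≤ M) (hM : IsClosed (M : Set E)) :
    IsClosed ((M.map K.mkQ : Submodule R (E ⧸ K)) : Set (E ⧸ K)) := by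
  have hpre : comap K.mkQ (M.map K.mkQ) = M := by rw [comap_map_mkQ, sup_eq_right.2 hKM]
  rw [← K.isQuotientMap_mkQ.isClosed_preimage]
  convert hM using 1
  exact congrArg SetLike.coe hpre

variable (M N : Submodule R E)

def quotientInfToSupQuotientL : M.map (M ⊓ N).mkQ →L[R] (M ⊔ N).map N.mkQ :=
  (((M ⊓ N).liftQL N.mkQL fun _ hx => by simpa using hx.2).domRestrict _).codRestrict _ <| by
    rintro ⟨_, m, hm, rfl⟩
    exact mem_map_of_mem (mem_sup_left hm)

variable {M N}

theorem quotientInfToSupQuotientL_mkQ {m n : E} (hm : m ∈ M) (hn : n ∈ N) :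
    quotientInfToSupQuotientL M N ⟨(M ⊓ N).mkQ m, mem_map_of_mem hm⟩ =
      ⟨N.mkQ (m + n), mem_map_of_mem (add_mem_sup hm hn)⟩ := by
  ext
  show N.mkQ m = N.mkQ (m + n)
  simpa [Quotient.eq] using neg_mem hn

variable (M N)

theorem ker_quotientInfToSupQuotientL : (quotientInfToSupQuotientL M N).ker = ⊥ := by
  rw [LinearMap.ker_eq_bot']
  rintro ⟨_, m, hm, rfl⟩ h
  have hmN : m ∈ N := by
    simpa [quotientInfToSupQuotientL, Quotient.mk_eq_zero] using congrArg Subtype.val h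
  exact Subtype.ext ((Quotient.mk_eq_zero _).2 ⟨hm, hmN⟩)

theorem range_quotientInfToSupQuotientL : (quotientInfToSupQuotientL M N).range = ⊤ := by
  rw [LinearMap.range_eq_top]
  rintro ⟨_, x, hx, rfl⟩
  obtain ⟨m, hm, n, hn, rfl⟩ := mem_sup.1 hx
  exact ⟨_, quotientInfToSupQuotientL_mkQ hm hn⟩

end Quotient

variable {𝕜 E : Type*} [NontriviallyNormedField 𝕜] [NormedAddCommGroup E] [NormedSpace 𝕜 E]
  [CompleteSpace E] {M N : Submodule 𝕜 E}

noncomputable def quotientInfEquivSupQuotientL (hM : IsClosed (M : Set E))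
    (hN : IsClosed (N : Set E))
    (hq : IsClosed (((M ⊔ N).map N.mkQ : Submodule 𝕜 (E ⧸ N)) : Set (E ⧸ N))) :
    M.map (M ⊓ N).mkQ ≃L[𝕜] (M ⊔ N).map N.mkQ :=
  haveI : IsClosed ((M ⊓ N : Submodule 𝕜 E) : Set E) := hM.inter hN
  haveI : IsClosed (N : Set E) := hN
  haveI := hq.completeSpace_coe
  haveI : CompleteSpace (M.map (M ⊓ N).mkQ) :=
    (isClosed_map_mkQ_of_le inf_le_left hM).completeSpace_coe
  ContinuousLinearEquiv.ofBijective (quotientInfToSupQuotientL M N)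
    (ker_quotientInfToSupQuotientL M N) (range_quotientInfToSupQuotientL M N)

theorem quotientInfEquivSupQuotientL_symm_mkQ (hM : IsClosed (M : Set E))
    (hN : IsClosed (N : Set E))
    (hq : IsClosed (((M ⊔ N).map N.mkQ : Submodule 𝕜 (E ⧸ N)) : Set (E ⧸ N)))
    {m n : E} (hm : m ∈ M) (hn : n ∈ N) :
    (quotientInfEquivSupQuotientL hM hN hq).symm
        ⟨N.mkQ (m + n), mem_map_of_mem (add_mem_sup hm hn)⟩ =
      ⟨(M ⊓ N).mkQ m, mem_map_of_mem hm⟩ :=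
  (ContinuousLinearEquiv.symm_apply_eq _).2 (quotientInfToSupQuotientL_mkQ hm hn).symm

end Submodule

theorem phi_is_continuous_linear_equiv (X : Type*) [NormedAddCommGroup X] [NormedSpace ℝ X]
    [CompleteSpace X] (M N : Submodule ℝ X)
    (hM : IsClosed (M : Set X)) (hN : IsClosed (N : Set X))
    (hq : IsClosed (((M ⊔ N).map N.mkQ : Submodule ℝ (X ⧸ N)) : Set (X ⧸ N))) :
    ∃ φ : ((M ⊔ N).map N.mkQ : Submodule ℝ (X ⧸ N)) ≃L[ℝ]
        (M.map (M ⊓ N).mkQ : Submodule ℝ (X ⧸ (M ⊓ N))),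
      ∀ (m n : X) (hm : m ∈ M) (hn : n ∈ N),
        φ ⟨N.mkQ (m + n), Submodule.mem_map_of_mem (Submodule.add_mem_sup hm hn)⟩ =
          ⟨(M ⊓ N).mkQ m, Submodule.mem_map_of_mem hm⟩ :=
  ⟨(Submodule.quotientInfEquivSupQuotientL hM hN hq).symm, fun _ _ hm hn =>
    Submodule.quotientInfEquivSupQuotientL_symm_mkQ hM hN hq hm hn⟩
end

section
/- Let X be a Banach space and M, N closed subspaces of X. If the addition map T : M × N → M + N is open, then M + N, with the norm inherited from X, is topologically isomorphic to the Banach space (M × N)/ker T, and consequently M + N is closed in X. -/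
/-!
The addition map is continuous, and by hypothesis open onto its range `M + N`, so it is a strict
map and the first isomorphism theorem holds topologically: `(M × N)/ker T ≃ M + N`. Since `M` and
`N` are closed in the Banach space `X`, the quotient `(M × N)/ker T` is complete; hence so is
`M + N`, and a complete subspace of a metric space is closed.
-/

open Topology

/-- The addition map `T : M ×₁ N → X`, `(m, n) ↦ m + n`, where the product
carries the `ℓ¹` (sum) norm `‖(m,n)‖ = ‖m‖ + ‖n‖`. -/
noncomputable def addT {X : Type*} [NormedAddCommGroup X] [NormedSpace ℝ X]
    (M N : Submodule ℝ X) : WithLp 1 (↥M × ↥N) →ₗ[ℝ] X :=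
  (M.subtype.coprod N.subtype).comp (WithLp.linearEquiv 1 ℝ (↥M × ↥N)).toLinearMap

theorem addT_mem_sup {X : Type*} [NormedAddCommGroup X] [NormedSpace ℝ X]
    (M N : Submodule ℝ X) (p : WithLp 1 (↥M × ↥N)) : addT M N p ∈ M ⊔ N :=
  Submodule.add_mem_sup ((WithLp.equiv 1 (↥M × ↥N)) p).1.2 ((WithLp.equiv 1 (↥M × ↥N)) p).2.2

section AdditionMap

variable {X : Type*} [NormedAddCommGroup X] [NormedSpace ℝ X] (M N : Submodule ℝ X)

theorem continuous_addT : Continuous (addT M N) :=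
  (continuous_subtype_val.comp (WithLp.prod_continuous_ofLp 1 M N).fst).add
    (continuous_subtype_val.comp (WithLp.prod_continuous_ofLp 1 M N).snd)

theorem range_addT : LinearMap.range (addT M N) = M ⊔ N := by
  rw [addT, LinearEquiv.range_comp, LinearMap.range_coprod, Submodule.range_subtype,
    Submodule.range_subtype]

theorem isStrictMap_addT
    (hopen : IsOpenMap (fun p : WithLp 1 (↥M × ↥N) =>
      (⟨addT M N p, addT_mem_sup M N p⟩ : ↥(M ⊔ N)))) :
    IsStrictMap (addT M N) :=
  IsEmbedding.subtypeVal.isStrictMap_iff.mp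
    (hopen.isStrictMap ((continuous_addT M N).subtype_mk _))

end AdditionMap

theorem Submodule.isClosed_of_continuousLinearEquiv {𝕜 E F : Type*} [NormedField 𝕜]
    [NormedAddCommGroup E] [NormedSpace 𝕜 E] [SeminormedAddCommGroup F] [NormedSpace 𝕜 F]
    [CompleteSpace F] (S : Submodule 𝕜 E) (e : F ≃L[𝕜] S) : IsClosed (S : Set E) := by
  have : CompleteSpace S := (completeSpace_congr (e := e.toEquiv) e.isUniformEmbedding).mp ‹_›
  exact (completeSpace_coe_iff_isComplete.mp this).isClosed

theorem open_addition_map_implies_closed (X : Type*) [NormedAddCommGroup X]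
    [NormedSpace ℝ X] [CompleteSpace X] (M N : Submodule ℝ X)
    (hM : IsClosed (M : Set X)) (hN : IsClosed (N : Set X))
    (hopen : IsOpenMap (fun p : WithLp 1 (↥M × ↥N) =>
      (⟨addT M N p, addT_mem_sup M N p⟩ : ↥(M ⊔ N)))) :
    Nonempty ((WithLp 1 (↥M × ↥N) ⧸ LinearMap.ker (addT M N)) ≃L[ℝ] ↥(M ⊔ N)) ∧
      IsClosed ((M ⊔ N : Submodule ℝ X) : Set X) := by
  let e : (WithLp 1 (↥M × ↥N) ⧸ LinearMap.ker (addT M N)) ≃L[ℝ] ↥(M ⊔ N) :=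
    (ContinuousLinearEquiv.quotKerEquivRange (isStrictMap_addT M N hopen)).trans
      (.ofEq _ _ (range_addT M N))
  have : CompleteSpace M := hM.completeSpace_coe
  have : CompleteSpace N := hN.completeSpace_coe
  exact ⟨⟨e⟩, (M ⊔ N).isClosed_of_continuousLinearEquiv e⟩
end

section
/- Let X be a Banach space and M, N closed subspaces of X. Suppose there exists K > 0 such that every x ∈ M + N admits a decomposition x = m + n with m ∈ M, n ∈ N, ‖m‖ ≤ K·‖x‖. Then M + N is closed in X. (Direct proof: given a sequence in M + N converging to x, pass to a subsequence with ‖x_{k+1} − x_k‖ ≤ 1/(2^k K), decompose the differences, and sum the resulting absolutely convergent series in M and N.) -/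
theorem bounded_decomposition_implies_closed (X : Type*) [NormedAddCommGroup X]
    [NormedSpace ℝ X] [CompleteSpace X] (M N : Submodule ℝ X)
    (hM : IsClosed (M : Set X)) (hN : IsClosed (N : Set X)) (K : ℝ) (hK : 0 < K)
    (h : ∀ x ∈ M ⊔ N, ∃ m ∈ M, ∃ n ∈ N, x = m + n ∧ ‖m‖ ≤ K * ‖x‖) :
    IsClosed ((M ⊔ N : Submodule ℝ X) : Set X) := by
  apply isClosed_of_closure_subset
  intro x hx
  rw [Metric.mem_closure_iff] at hx
  have hy : ∀ k : ℕ, ∃ y ∈ ((M ⊔ N : Submodule ℝ X) : Set X),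
      dist x y < (1/2 : ℝ)^k := fun k => hx _ (by positivity)
  choose y hyS hyd using hy
  set d : ℕ → X := fun k => y (k+1) - y k with hd_def
  have hdS : ∀ k : ℕ, d k ∈ M ⊔ N := fun k =>
    Submodule.sub_mem _ (hyS _) (hyS _)
  choose m hm n hn heq hnorm using fun k => h _ (hdS k)
  have hdnorm : ∀ k, ‖d k‖ ≤ 2 * (1/2 : ℝ)^k := by
    intro k
    have h1 := hyd k
    have h2 := hyd (k+1)
    have hle : (1/2 : ℝ)^(k+1) ≤ (1/2 : ℝ)^k := by
      apply pow_le_pow_of_le_one <;> norm_num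
    calc ‖d k‖ = dist (y (k+1)) (y k) := (dist_eq_norm _ _).symm
      _ ≤ dist (y (k+1)) x + dist x (y k) := dist_triangle _ _ _
      _ = dist x (y (k+1)) + dist x (y k) := by rw [dist_comm]
      _ ≤ (1/2 : ℝ)^(k+1) + (1/2 : ℝ)^k := by linarith
      _ ≤ 2 * (1/2 : ℝ)^k := by linarith
  have hdpos : ∀ k, (0:ℝ) ≤ ‖d k‖ := fun k => norm_nonneg _
  have hgeo : Summable (fun k : ℕ => (1/2 : ℝ)^k) := summable_geometric_two
  have hd_sum : Summable d := by
    apply Summable.of_norm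
    apply Summable.of_nonneg_of_le (fun k => norm_nonneg _) hdnorm
    exact hgeo.mul_left 2
  have hmb : ∀ k, ‖m k‖ ≤ K * 2 * (1/2:ℝ)^k := by
    intro k
    have h1 := mul_le_mul_of_nonneg_left (hdnorm k) hK.le
    have h2 := hnorm k
    linarith
  have hm_sum : Summable m := by
    apply Summable.of_norm
    exact Summable.of_nonneg_of_le (fun k => norm_nonneg _) hmb (hgeo.mul_left (K*2))
  have hn_eq : n = fun k => d k - m k := by
    funext k
    rw [heq k]
    abel
  have hn_sum : Summable n := by
    rw [hn_eq]; exact hd_sum.sub hm_sum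
  -- limits
  have hylim : Filter.Tendsto y Filter.atTop (nhds x) := by
    rw [tendsto_iff_dist_tendsto_zero]
    apply squeeze_zero (fun k => dist_nonneg) (fun k => (dist_comm (y k) x ▸ (hyd k).le))
    exact tendsto_pow_atTop_nhds_zero_of_lt_one (by norm_num) (by norm_num)
  have htel : ∀ k : ℕ, ∑ i ∈ Finset.range k, d i = y k - y 0 := by
    intro k
    simpa [hd_def] using Finset.sum_range_sub y k
  have hd_tsum : ∑' k, d k = x - y 0 := by
    have h1 : Filter.Tendsto (fun k => ∑ i ∈ Finset.range k, d i)
        Filter.atTop (nhds (∑' k, d k)) := hd_sum.hasSum.tendsto_sum_nat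
    have h2 : Filter.Tendsto (fun k => ∑ i ∈ Finset.range k, d i)
        Filter.atTop (nhds (x - y 0)) := by
      simp only [htel]
      exact hylim.sub tendsto_const_nhds
    exact tendsto_nhds_unique h1 h2
  have hmM : (∑' k, m k) ∈ M := by
    refine hM.mem_of_tendsto hm_sum.hasSum.tendsto_sum_nat
      (Filter.Eventually.of_forall fun k => ?_)
    exact Submodule.sum_mem M (fun i _ => hm i)
  have hnN : (∑' k, n k) ∈ N := by
    refine hN.mem_of_tendsto hn_sum.hasSum.tendsto_sum_nat
      (Filter.Eventually.of_forall fun k => ?_)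
    exact Submodule.sum_mem N (fun i _ => hn i)
  obtain ⟨m0, hm0, n0, hn0, heq0, -⟩ := h (y 0) (hyS 0)
  have hsplit : ∑' k, d k = (∑' k, m k) + (∑' k, n k) := by
    rw [← Summable.tsum_add hm_sum hn_sum]
    congr 1
    funext k
    exact heq k
  have : x = (m0 + ∑' k, m k) + (n0 + ∑' k, n k) := by
    have : x = y 0 + ∑' k, d k := by rw [hd_tsum]; abel
    rw [this, heq0, hsplit]; abel
  rw [this]
  exact Submodule.add_mem _
    (Submodule.mem_sup_left (Submodule.add_mem M hm0 hmM))
    (Submodule.mem_sup_right (Submodule.add_mem N hn0 hnN))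
end
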